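/- arXiv:2211.15147 — 3 statements merged into one kernel-verified Lean document; each statement's English description precedes it below -/
import Mathlib

section
/- Let X be a finite-dimensional real normed vector space and let μ be a Borel measure on X with nonempty support, finite on all closed balls, such that supp μ has no isolated points and for every x ∈ supp μ the function r ↦ μ(B(x,r)) is continuous on (0, ∞). Then there is no locally μ-integrable function f such that M^c_μ f(x) = M_μ f(x) for every x ∈ supp μ and, simultaneously, every local minimum point of the restriction of M_μ f to supp μ is a strict local minimum point. -/
/-!
Write `g` for the uncentered maximal function. Strict local minima of `g` form a countable set,
which is `μ`-null because `μ` has no atoms (an atom would make `r ↦ μ (closedBall y r)` jump).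
At a Lebesgue point `w` which is not a local minimum there are points `y` arbitrarily close to `w`
with `g y < g w`; a centered ball whose average is close to `M^c f w = g w` cannot contain `y`, so
such balls shrink and `|f w| = g w`. Hence a.e. on any ball `|f|` dominates its average over that
ball, so `|f|` is a.e. constant there. Near a local minimum `x` this contradicts `g > g x` on a
punctured neighbourhood of `x`; so `g` has no local minima, `|f|` is a.e. constant on the whole
space, and then `g` is constant on the support, making every point a local minimum.
-/

open MeasureTheory Metric Filter Topology

variable {X : Type*}

/-- The average of `|f|` over the closed ball of center `c` and radius `r`. -/
noncomputable def ballAvg [MetricSpace X] [MeasurableSpace X]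
    (μ : Measure X) (f : X → ℝ) (c : X) (r : ℝ) : ℝ :=
  (μ (closedBall c r)).toReal⁻¹ * ∫ y in closedBall c r, |f y| ∂μ

/-- The uncentered Hardy–Littlewood maximal function: the supremum of the averages of `|f|`
over all closed balls of positive measure containing `x`. -/
noncomputable def maximalU [MetricSpace X] [MeasurableSpace X]
    (μ : Measure X) (f : X → ℝ) (x : X) : ℝ :=
  sSup {a : ℝ | ∃ c : X, ∃ r : ℝ, x ∈ closedBall c r ∧ 0 < μ (closedBall c r) ∧
    a = ballAvg μ f c r}

/-- The centered Hardy–Littlewood maximal function: the supremum of the averages of `|f|`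
over all closed balls of positive measure centered at `x`. -/
noncomputable def maximalC [MetricSpace X] [MeasurableSpace X]
    (μ : Measure X) (f : X → ℝ) (x : X) : ℝ :=
  sSup {a : ℝ | ∃ r : ℝ, 0 < r ∧ 0 < μ (closedBall x r) ∧ a = ballAvg μ f x r}

/-- The support of a measure: points all of whose neighborhoods have positive measure. -/
def msupport [MetricSpace X] [MeasurableSpace X] (μ : Measure X) : Set X :=
  {x : X | ∀ r : ℝ, 0 < r → 0 < μ (ball x r)}

section LocalMin

variable [PseudoMetricSpace X]

def IsLocalMinWithin (g : X → ℝ) (s : Set X) (x : X) : Prop :=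
  ∃ r : ℝ, 0 < r ∧ ∀ y ∈ s, dist y x ≤ r → g x ≤ g y

def IsStrictLocalMinWithin (g : X → ℝ) (s : Set X) (x : X) : Prop :=
  ∃ r : ℝ, 0 < r ∧ ∀ y ∈ s, dist y x ≤ r → y ≠ x → g x < g y

def LocalMinimaAreStrict (g : X → ℝ) (s : Set X) : Prop :=
  ∀ x ∈ s, IsLocalMinWithin g s x → IsStrictLocalMinWithin g s x

/-- Strict local minima with radius at least `1 / (n + 1)` are `1 / (n + 1)`-separated. -/
theorem countable_setOf_isStrictLocalMinWithin [HereditarilyLindelofSpace X]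
    (g : X → ℝ) (s : Set X) : {x ∈ s | IsStrictLocalMinWithin g s x}.Countable := by
  let A : ℕ → Set X := fun n =>
    {x ∈ s | ∀ y ∈ s, dist y x ≤ 1 / (n + 1) → y ≠ x → g x < g y}
  have hA : ∀ n, (A n).Countable := fun n => by
    have : DiscreteTopology (A n) := .of_forall_le_dist (r := 1 / (n + 1)) (by positivity)
      fun x y hxy => by
        by_contra! hlt
        have hxy' : (x : X) ≠ y := Subtype.coe_ne_coe.2 hxy
        have h₁ := x.2.2 y y.2.1 (by rw [dist_comm]; exact hlt.le) hxy'.symm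
        have h₂ := y.2.2 x x.2.1 hlt.le hxy'
        exact h₁.not_gt h₂
    exact (HereditarilyLindelofSpace.isLindelof _).countable this
  refine (Set.countable_iUnion hA).mono ?_
  rintro x ⟨hx, r, hr, hmin⟩
  obtain ⟨n, hn⟩ := exists_nat_one_div_lt hr
  exact Set.mem_iUnion.2 ⟨n, hx, fun y hy hyx => hmin y hy (hyx.trans hn.le)⟩

end LocalMin

section Averages

variable [MetricSpace X] [MeasurableSpace X] {μ : Measure X} {f : X → ℝ}

def uncenteredAverages (μ : Measure X) (f : X → ℝ) (x : X) : Set ℝ :=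
  {a : ℝ | ∃ c : X, ∃ r : ℝ, x ∈ closedBall c r ∧ 0 < μ (closedBall c r) ∧
    a = ballAvg μ f c r}

def centeredAverages (μ : Measure X) (f : X → ℝ) (x : X) : Set ℝ :=
  {a : ℝ | ∃ r : ℝ, 0 < r ∧ 0 < μ (closedBall x r) ∧ a = ballAvg μ f x r}

theorem maximalU_eq_sSup (μ : Measure X) (f : X → ℝ) (x : X) :
    maximalU μ f x = sSup (uncenteredAverages μ f x) := rfl

theorem maximalC_eq_sSup (μ : Measure X) (f : X → ℝ) (x : X) :
    maximalC μ f x = sSup (centeredAverages μ f x) := rfl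

theorem ballAvg_nonneg (μ : Measure X) (f : X → ℝ) (c : X) (r : ℝ) : 0 ≤ ballAvg μ f c r :=
  mul_nonneg (inv_nonneg.2 ENNReal.toReal_nonneg) (integral_nonneg fun _ => abs_nonneg _)

theorem maximalU_nonneg (μ : Measure X) (f : X → ℝ) (x : X) : 0 ≤ maximalU μ f x :=
  Real.sSup_nonneg fun _ ⟨c, r, _, _, ha⟩ => ha ▸ ballAvg_nonneg μ f c r

theorem ballAvg_le_maximalU {x c : X} {r : ℝ} (hb : BddAbove (uncenteredAverages μ f x))
    (hx : x ∈ closedBall c r) (hμ : 0 < μ (closedBall c r)) :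
    ballAvg μ f c r ≤ maximalU μ f x :=
  le_csSup hb ⟨c, r, hx, hμ, rfl⟩

theorem ballAvg_le_maximalC {x : X} {r : ℝ} (hb : BddAbove (centeredAverages μ f x))
    (hr : 0 < r) (hμ : 0 < μ (closedBall x r)) :
    ballAvg μ f x r ≤ maximalC μ f x :=
  le_csSup hb ⟨r, hr, hμ, rfl⟩

/-- `maximalU` takes the junk value `0` where the true maximal function is `+∞`. -/
theorem maximalU_eq_zero_of_not_bddAbove {x : X} (h : ¬ BddAbove (uncenteredAverages μ f x)) :
    maximalU μ f x = 0 :=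
  Real.sSup_of_not_bddAbove h

theorem bddAbove_uncenteredAverages_of_maximalU_pos {x : X} (h : 0 < maximalU μ f x) :
    BddAbove (uncenteredAverages μ f x) := by
  by_contra hb
  rw [maximalU_eq_zero_of_not_bddAbove hb] at h
  exact h.false

theorem msupport_eq_support : msupport μ = μ.support := by
  ext x
  exact (nhds_basis_ball.mem_measureSupport).symm

theorem ae_mem_msupport [HereditarilyLindelofSpace X] (μ : Measure X) :
    ∀ᵐ x ∂μ, x ∈ msupport μ :=
  by rw [msupport_eq_support]; exact Measure.support_mem_ae

theorem measure_closedBall_pos {x : X} (hx : x ∈ msupport μ) {r : ℝ} (hr : 0 < r) :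
    0 < μ (closedBall x r) :=
  (hx r hr).trans_le (measure_mono ball_subset_closedBall)

theorem uncenteredAverages_nonempty {x : X} (hx : x ∈ msupport μ) :
    (uncenteredAverages μ f x).Nonempty :=
  ⟨_, x, 1, mem_closedBall_self zero_le_one, measure_closedBall_pos hx one_pos, rfl⟩

theorem centeredAverages_nonempty {x : X} (hx : x ∈ msupport μ) :
    (centeredAverages μ f x).Nonempty :=
  ⟨_, 1, one_pos, measure_closedBall_pos hx one_pos, rfl⟩

theorem maximalU_eq_of_isLUB {x : X} {a : ℝ} (hx : x ∈ msupport μ)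
    (h : IsLUB (uncenteredAverages μ f x) a) : maximalU μ f x = a :=
  h.csSup_eq (uncenteredAverages_nonempty hx)

theorem setIntegral_abs_eq_measureReal_mul_ballAvg {c : X} {r : ℝ}
    (hfin : μ (closedBall c r) ≠ ⊤) :
    ∫ y in closedBall c r, |f y| ∂μ = μ.real (closedBall c r) * ballAvg μ f c r := by
  rcases eq_or_ne (μ (closedBall c r)) 0 with h0 | h0
  · simp [Measure.restrict_eq_zero.2 h0, measureReal_def, h0]
  · rw [ballAvg, measureReal_def, ← mul_assoc,
      mul_inv_cancel₀ (ENNReal.toReal_ne_zero.2 ⟨h0, hfin⟩), one_mul]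

theorem ballAvg_eq_of_ae_abs_eq {c : X} {r a : ℝ}
    (h : ∀ᵐ y ∂μ.restrict (closedBall c r), |f y| = a)
    (h0 : μ (closedBall c r) ≠ 0) (hfin : μ (closedBall c r) ≠ ⊤) :
    ballAvg μ f c r = a := by
  rw [ballAvg, integral_congr_ae h, setIntegral_const, smul_eq_mul, measureReal_def, ← mul_assoc,
    inv_mul_cancel₀ (ENNReal.toReal_ne_zero.2 ⟨h0, hfin⟩), one_mul]

theorem ae_abs_eq_ballAvg_of_ballAvg_le [ProperSpace X] [IsFiniteMeasureOnCompacts μ]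
    (hf : LocallyIntegrable f μ) {c : X} {r : ℝ}
    (h : ∀ᵐ y ∂μ.restrict (closedBall c r), ballAvg μ f c r ≤ |f y|) :
    ∀ᵐ y ∂μ.restrict (closedBall c r), |f y| = ballAvg μ f c r := by
  have hfin : μ (closedBall c r) ≠ ⊤ := measure_closedBall_lt_top.ne
  have hint : IntegrableOn (fun y => |f y|) (closedBall c r) μ :=
    (hf.integrableOn_isCompact (isCompact_closedBall c r)).abs
  have hconst : IntegrableOn (fun _ => ballAvg μ f c r) (closedBall c r) μ :=
    integrableOn_const hfin
  have := (integral_eq_iff_of_ae_le hconst hint h).1 (by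
    rw [setIntegral_const, smul_eq_mul, setIntegral_abs_eq_measureReal_mul_ballAvg hfin])
  exact this.mono fun y hy => hy.symm

/-- The atom at `z` would make `r ↦ μ (closedBall y r)` jump at `r = dist z y`. -/
theorem measure_singleton_eq_zero_of_continuousOn_measure_closedBall [OpensMeasurableSpace X]
    {y z : X} (hzy : z ≠ y)
    (hcont : ContinuousOn (fun r : ℝ => μ (closedBall y r)) (Set.Ioi 0))
    (hfin : μ (closedBall y (dist z y)) ≠ ⊤) : μ {z} = 0 := by
  set e := dist z y
  have he : 0 < e := dist_pos.2 hzy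
  have : (𝓝[Set.Ioo 0 e] e).NeBot := right_nhdsWithin_Ioo_neBot he
  have hlim : Tendsto (fun r : ℝ => μ (closedBall y r)) (𝓝[Set.Ioo 0 e] e)
      (𝓝 (μ (closedBall y e))) :=
    (hcont e he).tendsto.mono_left (nhdsWithin_mono _ Set.Ioo_subset_Ioi_self)
  have hle : μ (closedBall y e) + μ {z} ≤ μ (closedBall y e) := by
    refine le_of_tendsto (hlim.add tendsto_const_nhds) (eventually_nhdsWithin_of_forall ?_)
    intro r hr
    have hdisj : Disjoint (closedBall y r) {z} :=
      Set.disjoint_singleton_right.2 fun hz => (mem_closedBall.1 hz).not_gt hr.2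
    rw [← measure_union hdisj (measurableSet_singleton z)]
    exact measure_mono (Set.union_subset (closedBall_subset_closedBall hr.2.le)
      (Set.singleton_subset_iff.2 (mem_closedBall.2 le_rfl)))
  exact (ENNReal.add_right_inj hfin).1 ((hle.antisymm le_self_add).trans (add_zero _).symm)

theorem nullSingletonClass_of_continuousOn_measure_closedBall [OpensMeasurableSpace X]
    (hfin : ∀ (c : X) (r : ℝ), μ (closedBall c r) < ⊤)
    (hnoiso : ∀ x ∈ msupport μ, ∀ r : ℝ, 0 < r → ∃ y ∈ msupport μ, y ≠ x ∧ dist y x < r)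
    (hcont : ∀ x ∈ msupport μ,
      ContinuousOn (fun r : ℝ => μ (closedBall x r)) (Set.Ioi (0 : ℝ))) :
    NullSingletonClass μ where
  measure_singleton z := by
    by_contra hz
    have hzS : z ∈ msupport μ := fun r hr => (pos_iff_ne_zero.2 hz).trans_le
      (measure_mono (Set.singleton_subset_iff.2 (mem_ball_self hr)))
    obtain ⟨y, hy, hyz, -⟩ := hnoiso z hzS 1 one_pos
    exact hz (measure_singleton_eq_zero_of_continuousOn_measure_closedBall hyz.symm (hcont y hy)
      (hfin _ _).ne)

theorem ae_tendsto_ballAvg [BorelSpace X] [SecondCountableTopology X]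
    [HasBesicovitchCovering X] [IsLocallyFiniteMeasure μ] (hf : LocallyIntegrable f μ) :
    ∀ᵐ x ∂μ, Tendsto (ballAvg μ f x) (𝓝[>] 0) (𝓝 |f x|) := by
  filter_upwards [VitaliFamily.ae_tendsto_average (Besicovitch.vitaliFamily μ)
    (locallyIntegrableOn_univ.1 (hf.locallyIntegrableOn _).norm)] with x hx
  refine (hx.comp (Besicovitch.tendsto_filterAt μ x)).congr fun r => ?_
  rw [Function.comp_apply, setAverage_eq, smul_eq_mul]
  rfl

theorem abs_eq_maximalU_of_not_isLocalMinWithin {w : X} {δ : ℝ} (hδ : 0 < δ)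
    (hw : w ∈ msupport μ)
    (hbdd : ∀ y ∈ msupport μ, dist y w < δ → BddAbove (uncenteredAverages μ f y))
    (heq : maximalC μ f w = maximalU μ f w)
    (hmin : ¬ IsLocalMinWithin (maximalU μ f) (msupport μ) w)
    (hlim : Tendsto (ballAvg μ f w) (𝓝[>] 0) (𝓝 |f w|)) :
    |f w| = maximalU μ f w := by
  have hbw := hbdd w hw (by simpa using hδ)
  refine le_antisymm (le_of_tendsto hlim (eventually_nhdsWithin_of_forall fun t ht =>
    ballAvg_le_maximalU hbw (mem_closedBall_self (le_of_lt ht))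
      (measure_closedBall_pos hw ht))) ?_
  by_contra! hlt
  obtain ⟨c, hfc, hcg⟩ := exists_between hlt
  obtain ⟨ε, hε, hsmall⟩ := mem_nhdsGT_iff_exists_Ioo_subset.1 (hlim.eventually (gt_mem_nhds hfc))
  rw [Set.mem_Ioi] at hε
  unfold IsLocalMinWithin at hmin
  push Not at hmin
  obtain ⟨y, hy, hyw, hgy⟩ := hmin (min (ε / 2) (δ / 2)) (by positivity)
  -- Centered balls with average close to `maximalU μ f w` cannot contain `y`, so they are small.
  have hsup : max c (maximalU μ f y) < sSup (centeredAverages μ f w) := by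
    rw [← maximalC_eq_sSup, heq]
    exact max_lt hcg hgy
  obtain ⟨_, ⟨t, ht, hμt, rfl⟩, hgt⟩ := exists_lt_of_lt_csSup
    (centeredAverages_nonempty hw) hsup
  rcases lt_or_ge t (dist y w) with hty | hyt
  · have : ballAvg μ f w t < c :=
      hsmall ⟨ht, hty.trans_le (hyw.trans ((min_le_left _ _).trans (by linarith)))⟩
    exact (lt_max_of_lt_left this).not_gt hgt
  · have := ballAvg_le_maximalU
      (hbdd y hy (hyw.trans_lt ((min_le_right _ _).trans_lt (by linarith))))
      (mem_closedBall.2 hyt) hμt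
    exact (le_max_of_le_right this).not_gt hgt

end Averages

section MaximalFunction

variable [MetricSpace X] [ProperSpace X] [MeasurableSpace X] {μ : Measure X}
  [IsFiniteMeasureOnCompacts μ] {f : X → ℝ}

theorem bddAbove_centeredAverages_of_ae_abs_eq {x w : X} {ρ a : ℝ}
    (h : ∀ᵐ y ∂μ.restrict (closedBall x ρ), |f y| = a) (hw : w ∈ closedBall x ρ)
    (hbw : BddAbove (uncenteredAverages μ f w)) : BddAbove (centeredAverages μ f x) := by
  refine ⟨max a (maximalU μ f w), ?_⟩
  rintro _ ⟨s, hs, hμs, rfl⟩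
  rcases le_or_gt s ρ with hsρ | hρs
  · have := ballAvg_eq_of_ae_abs_eq
      (ae_restrict_of_ae_restrict_of_subset (closedBall_subset_closedBall hsρ) h)
      hμs.ne' measure_closedBall_lt_top.ne
    exact this.le.trans (le_max_left _ _)
  · exact (ballAvg_le_maximalU hbw (closedBall_subset_closedBall hρs.le hw) hμs).trans
      (le_max_right _ _)

theorem maximalU_eq_of_ae_abs_eq {a : ℝ} (h : ∀ᵐ w ∂μ, |f w| = a) {x : X}
    (hx : x ∈ msupport μ) : maximalU μ f x = a := by
  have : uncenteredAverages μ f x = {a} := by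
    refine Set.eq_singleton_iff_nonempty_unique_mem.2 ⟨uncenteredAverages_nonempty hx, ?_⟩
    rintro _ ⟨c, r, -, hμ, rfl⟩
    exact ballAvg_eq_of_ae_abs_eq (ae_restrict_of_ae h) hμ.ne' measure_closedBall_lt_top.ne
  rw [maximalU_eq_sSup, this, csSup_singleton]

theorem ae_abs_eq_ballAvg_of_ae_mem_upperBounds [OpensMeasurableSpace X]
    (hf : LocallyIntegrable f μ) (h : ∀ᵐ w ∂μ, |f w| ∈ upperBounds (uncenteredAverages μ f w))
    {v : X} (hv : v ∈ msupport μ) : ∀ᵐ w ∂μ, |f w| = ballAvg μ f v 1 := by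
  have hpin : ∀ r, 0 < r → ∀ᵐ w ∂μ.restrict (closedBall v r), |f w| = ballAvg μ f v r :=
    fun r hr => ae_abs_eq_ballAvg_of_ballAvg_le hf <| by
      filter_upwards [ae_restrict_of_ae h, ae_restrict_mem measurableSet_closedBall] with w hw hwB
      exact hw ⟨v, r, hwB, measure_closedBall_pos hv hr, rfl⟩
  have hball : ∀ n : ℕ, ∀ᵐ w ∂μ.restrict (closedBall v n), |f w| = ballAvg μ f v 1 := by
    intro n
    have hn : (1 : ℝ) ≤ n + 1 := by linarith [n.cast_nonneg (α := ℝ)]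
    have hpin' := hpin (n + 1) (by linarith)
    have heq : ballAvg μ f v (n + 1) = ballAvg μ f v 1 :=
      (ballAvg_eq_of_ae_abs_eq (ae_restrict_of_ae_restrict_of_subset
        (closedBall_subset_closedBall hn) hpin') (measure_closedBall_pos hv one_pos).ne'
        measure_closedBall_lt_top.ne).symm
    exact heq ▸ ae_restrict_of_ae_restrict_of_subset
      (closedBall_subset_closedBall (by linarith)) hpin'
  have := (ae_restrict_iUnion_iff _ _).2 hball
  rwa [iUnion_closedBall_nat, Measure.restrict_univ] at this

variable [BorelSpace X] [HasBesicovitchCovering X] [NullSingletonClass μ]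

theorem ae_isLUB_abs_of_bddAbove (hf : LocallyIntegrable f μ)
    (heq : ∀ x ∈ msupport μ, maximalC μ f x = maximalU μ f x)
    (hstrict : LocalMinimaAreStrict (maximalU μ f) (msupport μ)) {V : Set X} (hV : IsOpen V)
    (hbdd : ∀ y ∈ msupport μ, y ∈ V → BddAbove (uncenteredAverages μ f y)) :
    ∀ᵐ w ∂μ, w ∈ V → IsLUB (uncenteredAverages μ f w) |f w| := by
  have hmin : ∀ᵐ w ∂μ,
      w ∉ {x ∈ msupport μ | IsStrictLocalMinWithin (maximalU μ f) (msupport μ) x} :=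
    measure_eq_zero_iff_ae_notMem.1 ((countable_setOf_isStrictLocalMinWithin _ _).measure_zero μ)
  filter_upwards [ae_mem_msupport μ, ae_tendsto_ballAvg hf, hmin] with w hwS hlim hwmin hwV
  obtain ⟨δ, hδ, hball⟩ := Metric.isOpen_iff.1 hV w hwV
  have habs := abs_eq_maximalU_of_not_isLocalMinWithin hδ hwS
    (fun y hy hyw => hbdd y hy (hball (mem_ball.2 hyw))) (heq w hwS)
    (fun h => hwmin ⟨hwS, hstrict w hwS h⟩) hlim
  exact habs ▸ isLUB_csSup (uncenteredAverages_nonempty hwS) (hbdd w hwS hwV)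

theorem not_isLocalMinWithin_maximalU (hf : LocallyIntegrable f μ)
    (heq : ∀ x ∈ msupport μ, maximalC μ f x = maximalU μ f x)
    (hstrict : LocalMinimaAreStrict (maximalU μ f) (msupport μ)) {x : X}
    (hx : x ∈ msupport μ) : ¬ IsLocalMinWithin (maximalU μ f) (msupport μ) x := by
  intro hmin
  obtain ⟨r, hr, hlt⟩ := hstrict x hx hmin
  have hbdd : ∀ y ∈ msupport μ, y ∈ ball x r \ {x} → BddAbove (uncenteredAverages μ f y) :=
    fun y hy hyV => bddAbove_uncenteredAverages_of_maximalU_pos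
      ((maximalU_nonneg μ f x).trans_lt (hlt y hy (mem_ball.1 hyV.1).le hyV.2))
  have hgood : ∀ᵐ w ∂μ.restrict (closedBall x (r / 2)), w ∈ closedBall x (r / 2) ∧
      maximalU μ f x < |f w| ∧ IsLUB (uncenteredAverages μ f w) |f w| := by
    filter_upwards [ae_restrict_of_ae (ae_isLUB_abs_of_bddAbove hf heq hstrict
        (isOpen_ball.sdiff isClosed_singleton) hbdd),
      ae_restrict_of_ae (ae_mem_msupport μ),
      ae_restrict_of_ae (measure_eq_zero_iff_ae_notMem.1 (measure_singleton x)),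
      ae_restrict_mem measurableSet_closedBall] with w hlub hwS hwx hwB
    have hwV : w ∈ ball x r \ {x} := ⟨closedBall_subset_ball (by linarith) hwB, hwx⟩
    refine ⟨hwB, ?_, hlub hwV⟩
    rw [← maximalU_eq_of_isLUB hwS (hlub hwV)]
    exact hlt w hwS (mem_ball.1 hwV.1).le hwx
  have hpos : 0 < μ (closedBall x (r / 2)) := measure_closedBall_pos hx (by linarith)
  have hpin : ∀ᵐ w ∂μ.restrict (closedBall x (r / 2)), |f w| = ballAvg μ f x (r / 2) :=
    ae_abs_eq_ballAvg_of_ballAvg_le hf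
      (hgood.mono fun w hw => hw.2.2.1 ⟨x, r / 2, hw.1, hpos, rfl⟩)
  have : (ae (μ.restrict (closedBall x (r / 2)))).NeBot := ae_restrict_neBot.2 hpos.ne'
  obtain ⟨w, ⟨hwB, hxw, hlub⟩, hw⟩ := (hgood.and hpin).exists
  -- `|f|` is constant near `x`, so the centered averages at `x` are bounded even when
  -- `maximalU μ f x` is the junk value `0`.
  have hC := bddAbove_centeredAverages_of_ae_abs_eq hpin hwB hlub.bddAbove
  have hle := ballAvg_le_maximalC hC (by linarith) hpos
  rw [heq x hx] at hle
  linarith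

end MaximalFunction

/-- On a finite-dimensional normed space, for a measure whose support has no isolated points
and whose ball-measure functions are continuous on `(0, ∞)`, there is no locally integrable
function `f` with `M^c_μ f = M_μ f` on the support such that every local minimum point of
`M_μ f` restricted to the support is a strict local minimum point. -/
theorem no_function_with_centered_eq_uncentered_and_strict_minima
    [NormedAddCommGroup X] [NormedSpace ℝ X] [FiniteDimensional ℝ X]
    [MeasurableSpace X] [BorelSpace X]
    (μ : Measure X)
    (hsupp : (msupport μ).Nonempty)
    (hfin : ∀ (c : X) (r : ℝ), μ (closedBall c r) < ⊤)
    (hnoiso : ∀ x ∈ msupport μ, ∀ r : ℝ, 0 < r → ∃ y ∈ msupport μ, y ≠ x ∧ dist y x < r)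
    (hcont : ∀ x ∈ msupport μ,
      ContinuousOn (fun r : ℝ => μ (closedBall x r)) (Set.Ioi (0 : ℝ))) :
    ¬ ∃ f : X → ℝ, LocallyIntegrable f μ ∧
      (∀ x ∈ msupport μ, maximalC μ f x = maximalU μ f x) ∧
      (∀ x₀ ∈ msupport μ,
        (∃ r : ℝ, 0 < r ∧ ∀ y ∈ msupport μ, dist y x₀ ≤ r →
          maximalU μ f x₀ ≤ maximalU μ f y) →
        (∃ r : ℝ, 0 < r ∧ ∀ y ∈ msupport μ, dist y x₀ ≤ r → y ≠ x₀ →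
          maximalU μ f x₀ < maximalU μ f y)) := by
  rintro ⟨f, hf, heq, hstrict⟩
  have : IsLocallyFiniteMeasure μ :=
    ⟨fun x => ⟨closedBall x 1, closedBall_mem_nhds x one_pos, hfin x 1⟩⟩
  have := nullSingletonClass_of_continuousOn_measure_closedBall hfin hnoiso hcont
  have hbdd : ∀ x ∈ msupport μ, BddAbove (uncenteredAverages μ f x) := by
    intro x hx
    by_contra hb
    refine not_isLocalMinWithin_maximalU hf heq hstrict hx ⟨1, one_pos, fun y _ _ => ?_⟩
    rw [maximalU_eq_zero_of_not_bddAbove hb]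
    exact maximalU_nonneg μ f y
  have hlub := ae_isLUB_abs_of_bddAbove hf heq hstrict isOpen_univ fun y hy _ => hbdd y hy
  obtain ⟨v, hv⟩ := hsupp
  have hconst := ae_abs_eq_ballAvg_of_ae_mem_upperBounds hf
    (hlub.mono fun w hw => (hw trivial).1) hv
  refine not_isLocalMinWithin_maximalU hf heq hstrict hv ⟨1, one_pos, fun y hy _ => ?_⟩
  rw [maximalU_eq_of_ae_abs_eq hconst hv, maximalU_eq_of_ae_abs_eq hconst hy]
end

section
/- Let (X, ρ) be a separable metric space and let g : X → ℝ be any function. Then the set of strict local minimum points of g, i.e., the set of x₀ ∈ X for which there exists r > 0 with g(y) > g(x₀) for all y ≠ x₀ with ρ(y, x₀) ≤ r, is countable. -/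
open MeasureTheory Metric Filter Topology

variable {X : Type*}

/-- In a separable metric space, the set of strict local minimum points of an arbitrary
real-valued function is countable. -/
theorem countable_strict_local_minima
    [MetricSpace X] [TopologicalSpace.SeparableSpace X] (g : X → ℝ) :
    Set.Countable {x₀ : X | ∃ r : ℝ, 0 < r ∧
      ∀ y : X, y ≠ x₀ → dist y x₀ ≤ r → g x₀ < g y} := by
  obtain ⟨D, Dcnt, Ddense⟩ := TopologicalSpace.exists_countable_dense X
  have hsub : {x₀ : X | ∃ r : ℝ, 0 < r ∧
      ∀ y : X, y ≠ x₀ → dist y x₀ ≤ r → g x₀ < g y} ⊆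
      ⋃ d ∈ D, ⋃ q : ℚ, {x : X | dist d x < q / 2 ∧
        ∀ y : X, y ≠ x → dist y x ≤ q → g x < g y} := by
    intro x ⟨r, hr, hx⟩
    obtain ⟨q, hq0, hqr⟩ := exists_rat_btwn hr
    obtain ⟨d, hd, hdx⟩ := Ddense.exists_dist_lt x (by positivity : (0:ℝ) < q / 2)
    refine Set.mem_iUnion₂.2 ⟨d, hd, Set.mem_iUnion.2 ⟨q, ?_, ?_⟩⟩
    · rwa [dist_comm] at hdx
    · exact fun y hy hyx => hx y hy (hyx.trans hqr.le)
  refine (Dcnt.biUnion fun d _ => Set.countable_iUnion fun q => ?_).mono hsub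
  apply Set.Subsingleton.countable
  rintro x ⟨hxd, hx⟩ x' ⟨hx'd, hx'⟩
  by_contra hne
  have h1 : dist x x' ≤ (q : ℝ) := le_of_lt <| by
    calc dist x x' ≤ dist x d + dist d x' := dist_triangle _ _ _
      _ < q / 2 + q / 2 := by rw [dist_comm x d]; exact add_lt_add hxd hx'd
      _ = q := by ring
  have := hx' x hne h1
  have := hx x' (Ne.symm hne) (by rwa [dist_comm])
  linarith
end

section
/- Let (X, ρ) be a metric space and let μ be a finite discrete measure, i.e., a finite positive linear combination of Dirac point masses μ = Σ_{i=1}^{n} c_i δ_{x_i} with c_i > 0 and n ≥ 1. Then every locally μ-integrable fixed point of the uncentered maximal operator is constant on supp μ; that is, if f satisfies M_μ f(x) = f(x) for every x ∈ supp μ, then f is constant on supp μ = {x_1, …, x_n}. -/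
open MeasureTheory Metric Filter Topology

variable {X : Type*}

/-!
Any atom `x j` lies in a closed ball containing all atoms, and the average of `|f|` over that
ball is `A = (∑ c i * |f (x i)|) / ∑ c i`. So a fixed point satisfies `A ≤ f (x j)` at every atom.
Averaging these inequalities with the weights `c j` gives `∑ c j * |f (x j)| ≤ ∑ c j * f (x j)`,
which is only possible if `f (x j) = A` for every `j`. The supremum defining the maximal function
is a genuine one because all ball averages are bounded by `∑ |f (x i)|`, as `μ` lives on the atoms.
-/

noncomputable def weightedDirac {ι : Type*} [Fintype ι] [MeasurableSpace X]
    (x : ι → X) (c : ι → ℝ) : Measure X :=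
  ∑ i, ENNReal.ofReal (c i) • Measure.dirac (x i)

namespace weightedDirac

variable {ι : Type*} [Fintype ι] [MeasurableSpace X] (x : ι → X) (c : ι → ℝ)

instance : IsFiniteMeasure (weightedDirac x c) :=
  ⟨by simp [weightedDirac, Measure.finsetSum_apply, ENNReal.sum_lt_top]⟩

lemma apply_pos {s : Set X} {i : ι} (hc : 0 < c i) (hi : x i ∈ s) :
    0 < weightedDirac x c s := by
  rw [weightedDirac, Measure.finsetSum_apply]
  refine lt_of_lt_of_le ?_ (Finset.single_le_sum (fun j _ => zero_le) (Finset.mem_univ i))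
  simp [hc, hi]

variable [MeasurableSingletonClass X]

lemma apply_eq_zero {s : Set X} (hs : ∀ i, x i ∉ s) : weightedDirac x c s = 0 := by
  simp [weightedDirac, Measure.finsetSum_apply, hs]

lemma ae_mem_range : ∀ᵐ y ∂weightedDirac x c, y ∈ Set.range x :=
  apply_eq_zero x c fun i hi => hi (Set.mem_range_self i)

lemma integral_eq {c : ι → ℝ} (hc : ∀ i, 0 ≤ c i) (g : X → ℝ) :
    ∫ y, g y ∂weightedDirac x c = ∑ i, c i * g (x i) := by
  rw [weightedDirac, integral_finsetSum_measure fun i _ =>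
    (integrable_dirac enorm_lt_top).smul_measure ENNReal.ofReal_ne_top]
  simp [integral_smul_measure, ENNReal.toReal_ofReal (hc _)]

lemma measureReal_univ {c : ι → ℝ} (hc : ∀ i, 0 ≤ c i) :
    (weightedDirac x c).real Set.univ = ∑ i, c i := by
  simpa using integral_eq x hc fun _ => 1

lemma msupport_eq [MetricSpace X] [BorelSpace X] {c : ι → ℝ} (hc : ∀ i, 0 < c i) :
    msupport (weightedDirac x c) = Set.range x := by
  refine Set.Subset.antisymm (fun z hz => ?_) ?_
  · by_contra hzx
    obtain ⟨r, hr, hball⟩ := Metric.isOpen_iff.1 (Set.finite_range x).isClosed.isOpen_compl z hzx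
    exact (hz r hr).ne' (apply_eq_zero x c fun i hi => hball hi (Set.mem_range_self i))
  · rintro _ ⟨i, rfl⟩ r hr
    exact apply_pos x c (hc i) (mem_ball_self hr)

end weightedDirac

section MaximalFunction

variable [MetricSpace X] [MeasurableSpace X] {μ : Measure X} {f : X → ℝ} {z c : X} {r M : ℝ}

lemma ballAvg_le_of_ae_abs_le (hM₀ : 0 ≤ M) (hM : ∀ᵐ y ∂μ, |f y| ≤ M)
    (hfin : μ (closedBall c r) < ⊤) : ballAvg μ f c r ≤ M := by
  have hint : ∫ y in closedBall c r, |f y| ∂μ ≤ M * μ.real (closedBall c r) :=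
    (Real.le_norm_self _).trans <| norm_setIntegral_le_of_norm_le_const_ae hfin <|
      ae_restrict_of_ae <| hM.mono fun y hy => by rwa [Real.norm_eq_abs, abs_abs]
  calc ballAvg μ f c r ≤ (μ.real (closedBall c r))⁻¹ * (M * μ.real (closedBall c r)) :=
        mul_le_mul_of_nonneg_left hint (inv_nonneg.2 measureReal_nonneg)
    _ ≤ M := by
        rw [mul_left_comm]
        exact mul_le_of_le_one_right hM₀ (inv_mul_le_one_of_le₀ le_rfl measureReal_nonneg)

lemma ballAvg_eq_of_ae_mem (h : ∀ᵐ y ∂μ, y ∈ closedBall c r) :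
    ballAvg μ f c r = (μ.real Set.univ)⁻¹ * ∫ y, |f y| ∂μ := by
  rw [ballAvg, ← Measure.restrict_apply_univ, Measure.restrict_eq_self_of_ae_mem h,
    measureReal_def]

lemma ballAvg_le_maximalU_s13 (hbound : ∀ c r, ballAvg μ f c r ≤ M) (hz : z ∈ closedBall c r)
    (hpos : 0 < μ (closedBall c r)) : ballAvg μ f c r ≤ maximalU μ f z :=
  le_csSup ⟨M, by rintro _ ⟨c, r, -, -, rfl⟩; exact hbound c r⟩ ⟨c, r, hz, hpos, rfl⟩

end MaximalFunction

lemma eq_of_forall_le_of_sum_mul_le {ι : Type*} [Fintype ι] {w a : ι → ℝ} {A : ℝ}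
    (hw : ∀ i, 0 < w i) (ha : ∀ i, A ≤ a i) (hsum : ∑ i, w i * a i ≤ (∑ i, w i) * A) (i : ι) :
    a i = A := by
  have hle : ∀ i ∈ Finset.univ, w i * A ≤ w i * a i :=
    fun i _ => mul_le_mul_of_nonneg_left (ha i) (hw i).le
  have heq : ∑ i, w i * A = ∑ i, w i * a i :=
    le_antisymm (Finset.sum_le_sum hle) (by rwa [Finset.sum_mul] at hsum)
  exact (mul_left_cancel₀ (hw i).ne' ((Finset.sum_eq_sum_iff_of_le hle).1 heq i
    (Finset.mem_univ i))).symm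

namespace weightedDirac

variable [MetricSpace X] [MeasurableSpace X] [BorelSpace X] {ι : Type*} [Fintype ι]
  (x : ι → X) {c : ι → ℝ} (f : X → ℝ)

lemma ballAvg_le_sum_abs (z : X) (r : ℝ) :
    ballAvg (weightedDirac x c) f z r ≤ ∑ i, |f (x i)| :=
  ballAvg_le_of_ae_abs_le (Finset.sum_nonneg fun i _ => abs_nonneg _)
    ((ae_mem_range x c).mono <| by
      rintro _ ⟨i, rfl⟩
      exact Finset.single_le_sum (fun j _ => abs_nonneg (f (x j))) (Finset.mem_univ i))
    (measure_lt_top _ _)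

lemma weightedMean_abs_le_maximalU (hc : ∀ i, 0 < c i) (j : ι) :
    (∑ i, c i)⁻¹ * ∑ i, c i * |f (x i)| ≤ maximalU (weightedDirac x c) f (x j) := by
  set R := ∑ i, dist (x i) (x j)
  have hball : ∀ i, x i ∈ closedBall (x j) R := fun i =>
    mem_closedBall.2 (Finset.single_le_sum (fun k _ => dist_nonneg) (Finset.mem_univ i))
  have hconc : ∀ᵐ y ∂weightedDirac x c, y ∈ closedBall (x j) R :=
    (ae_mem_range x c).mono <| by rintro _ ⟨i, rfl⟩; exact hball i
  calc (∑ i, c i)⁻¹ * ∑ i, c i * |f (x i)| = ballAvg (weightedDirac x c) f (x j) R := by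
        rw [ballAvg_eq_of_ae_mem hconc, measureReal_univ x fun i => (hc i).le,
          integral_eq x (fun i => (hc i).le)]
    _ ≤ maximalU (weightedDirac x c) f (x j) :=
        ballAvg_le_maximalU_s13 (ballAvg_le_sum_abs x f) (hball j) (apply_pos x c (hc j) (hball j))

end weightedDirac

theorem fixed_points_constant_of_discrete_measure_general
    [MetricSpace X] [MeasurableSpace X] [BorelSpace X]
    (μ : Measure X)
    (n : ℕ) (x : Fin n → X) (c : Fin n → ℝ) (hc : ∀ i, 0 < c i)
    (hμ : μ = ∑ i : Fin n, ENNReal.ofReal (c i) • Measure.dirac (x i))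
    (f : X → ℝ)
    (hfix : ∀ z ∈ msupport μ, maximalU μ f z = f z) :
    ∀ z ∈ msupport μ, ∀ w ∈ msupport μ, f z = f w := by
  obtain rfl : μ = weightedDirac x c := hμ
  rw [weightedDirac.msupport_eq x hc] at hfix ⊢
  rintro _ ⟨j, rfl⟩ _ ⟨k, rfl⟩
  set A := (∑ i, c i)⁻¹ * ∑ i, c i * |f (x i)|
  have hA : ∀ i, A ≤ f (x i) := fun i =>
    hfix _ (Set.mem_range_self i) ▸ weightedDirac.weightedMean_abs_le_maximalU x f hc i
  have hsum : ∑ i, c i * f (x i) ≤ (∑ i, c i) * A := by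
    have hc_sum : 0 < ∑ i, c i := Finset.sum_pos (fun i _ => hc i) ⟨j, Finset.mem_univ j⟩
    calc ∑ i, c i * f (x i) ≤ ∑ i, c i * |f (x i)| :=
          Finset.sum_le_sum fun i _ => mul_le_mul_of_nonneg_left (le_abs_self _) (hc i).le
      _ = (∑ i, c i) * A := (mul_inv_cancel_left₀ hc_sum.ne' _).symm
  rw [eq_of_forall_le_of_sum_mul_le hc hA hsum j, eq_of_forall_le_of_sum_mul_le hc hA hsum k]

/-- For a finite discrete measure `μ = Σ_{i=1}^n c_i δ_{x_i}` with `c_i > 0`, every locally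
integrable fixed point of the uncentered maximal operator is constant on the support of `μ`. -/
theorem fixed_points_constant_of_discrete_measure
    [MetricSpace X] [MeasurableSpace X] [BorelSpace X]
    (μ : Measure X)
    (n : ℕ) (hn : 1 ≤ n) (x : Fin n → X) (c : Fin n → ℝ) (hc : ∀ i, 0 < c i)
    (hμ : μ = ∑ i : Fin n, ENNReal.ofReal (c i) • Measure.dirac (x i))
    (f : X → ℝ) (hf : LocallyIntegrable f μ)
    (hfix : ∀ z ∈ msupport μ, maximalU μ f z = f z) :
    ∀ z ∈ msupport μ, ∀ w ∈ msupport μ, f z = f w :=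
  fixed_points_constant_of_discrete_measure_general μ n x c hc hμ f hfix
end
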